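/- Blow up of the comparison integral equation before any prescribed time (Lemma 4.5(b)): Fix c > 0, L₂ ∈ ℝ, and τ₀ > 0. Then there exists L₃ > L₂ such that there is no solution f of the integral equation on [L₂,L₃]×[0,τ₀]; equivalently, every solution f of the integral equation on [L₂,L₃]×[0,T) with T ≤ τ₀ maximal satisfies sup_{t<T} f(L₃,t) = ∞ with T ≤ τ₀. -/

import Mathlib

open MeasureTheory intervalIntegral Set

namespace IntEqBlowupAux


lemma hasDerivAt_W3 {c T r : ℝ} (hc : 0 < c) (hr : T - r ≠ 0) :
    HasDerivAt (fun r => 24 / c * ((T - r) ^ 3)⁻¹) (c / 2 * (12 / (c * (T - r) ^ 2)) ^ 2) r := by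
  have h1 : HasDerivAt (fun r : ℝ => T - r) (-1) r := (hasDerivAt_id r).const_sub T
  have h2 := (h1.pow 3).inv (pow_ne_zero 3 hr)
  have h3 := h2.const_mul (24 / c)
  refine h3.congr_deriv ?_
  have : c ≠ 0 := ne_of_gt hc
  simp only [Pi.pow_apply]
  field_simp
  ring

lemma W_identity {c T t : ℝ} (hc : 0 < c) (hT : 0 < T) (ht0 : 0 ≤ t) (ht : t < T) :
    12 / (c * T ^ 2) + 24 * t / (c * T ^ 3)
      + ∫ s in (0:ℝ)..t, (∫ r in (0:ℝ)..s, c / 2 * (12 / (c * (T - r) ^ 2)) ^ 2)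
      = 12 / (c * (T - t) ^ 2) := by
  have hc' : c ≠ 0 := ne_of_gt hc
  have hinner : ∀ s ∈ Set.uIcc (0:ℝ) t,
      (∫ r in (0:ℝ)..s, c / 2 * (12 / (c * (T - r) ^ 2)) ^ 2)
        = 24 / c * ((T - s) ^ 3)⁻¹ - 24 / c * ((T - 0) ^ 3)⁻¹ := by
    intro s hs
    rw [Set.uIcc_of_le ht0] at hs
    apply integral_eq_sub_of_hasDerivAt
    · intro r hr
      rw [Set.uIcc_of_le hs.1] at hr
      exact hasDerivAt_W3 hc (by nlinarith [hr.2, hs.2] : T - r ≠ 0).elim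
    · apply ContinuousOn.intervalIntegrable
      apply ContinuousOn.mul continuousOn_const
      apply ContinuousOn.pow
      apply ContinuousOn.div continuousOn_const
      · fun_prop
      · intro r hr
        rw [Set.uIcc_of_le hs.1] at hr
        have : T - r ≠ 0 := by nlinarith [hr.2, hs.2]
        positivity
  have houter : (∫ s in (0:ℝ)..t, (∫ r in (0:ℝ)..s, c / 2 * (12 / (c * (T - r) ^ 2)) ^ 2))
      = ∫ s in (0:ℝ)..t, (24 / c * ((T - s) ^ 3)⁻¹ - 24 / c * ((T - 0) ^ 3)⁻¹) :=
    intervalIntegral.integral_congr hinner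
  rw [houter]
  have hftc : (∫ s in (0:ℝ)..t, (24 / c * ((T - s) ^ 3)⁻¹ - 24 / c * ((T - 0) ^ 3)⁻¹))
      = (12 / c * ((T - t) ^ 2)⁻¹ - 24 / c * ((T - 0) ^ 3)⁻¹ * t)
        - (12 / c * ((T - 0) ^ 2)⁻¹ - 24 / c * ((T - 0) ^ 3)⁻¹ * 0) := by
    apply integral_eq_sub_of_hasDerivAt
    · intro s hs
      rw [Set.uIcc_of_le ht0] at hs
      have hne : T - s ≠ 0 := by
        have : s < T := lt_of_le_of_lt hs.2 ht
        intro h; linarith [sub_pos.2 this, h.symm.le]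
      have h1 : HasDerivAt (fun s : ℝ => T - s) (-1) s := (hasDerivAt_id s).const_sub T
      have h2 := ((h1.pow 2).inv (pow_ne_zero 2 hne)).const_mul (12 / c)
      have h3 := (((hasDerivAt_id s).const_mul (24 / c * ((T - 0) ^ 3)⁻¹)))
      have h4 := h2.sub h3
      convert h4 using 1
      · rfl
      simp only [Pi.pow_apply]
      field_simp
      ring
    · apply ContinuousOn.intervalIntegrable
      apply ContinuousOn.sub _ continuousOn_const
      apply ContinuousOn.mul continuousOn_const
      apply ContinuousOn.inv₀
      · fun_prop
      · intro s hs
        rw [Set.uIcc_of_le ht0] at hs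
        have : s < T := lt_of_le_of_lt hs.2 ht
        have : T - s ≠ 0 := by intro h; linarith [h.symm.le]
        positivity
  rw [hftc]
  have hne1 : T - t ≠ 0 := by intro h; linarith [h.symm.le]
  have hne2 : T ≠ 0 := ne_of_gt hT
  field_simp
  ring

lemma comparison {c T τ₀ ℓ : ℝ} (hc : 0 < c) (hT : 0 < T) (hTτ : T ≤ τ₀)
    (hℓ : 36 / (c * T ^ 2) < ℓ) (v : ℝ → ℝ) (hv : Continuous v)
    (hkey : ∀ t ∈ Icc 0 τ₀,
      ℓ + (∫ s in (0:ℝ)..t, (∫ r in (0:ℝ)..s, c / 2 * v r ^ 2)) ≤ v t) : False := by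
  set W : ℝ → ℝ := fun t => 12 / (c * (T - t) ^ 2) with hWdef
  -- a bound for v on [0, τ₀]
  obtain ⟨M, hM⟩ := (isCompact_Icc.image hv).bddAbove
  rw [mem_upperBounds] at hM
  have hMb : ∀ t ∈ Icc (0:ℝ) τ₀, v t ≤ M := fun t ht => hM _ (mem_image_of_mem v ht)
  -- comparison with W
  have compare : ∀ t₁, 0 ≤ t₁ → t₁ < T → W t₁ ≤ v t₁ := by
    by_contra hcon
    push_neg at hcon
    obtain ⟨t₁, ht₁0, ht₁T, hlt⟩ := hcon
    set K : Set ℝ := Icc 0 t₁ ∩ (fun t => v t - W t) ⁻¹' Iic 0 with hKdef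
    have hWcont : ContinuousOn W (Icc 0 t₁) := by
      apply ContinuousOn.div continuousOn_const
      · fun_prop
      · intro x hx
        have hxT : T - x ≠ 0 := by
          have : x < T := lt_of_le_of_lt hx.2 ht₁T
          intro h; linarith [h.symm.le]
        positivity
    have hKclosed : IsClosed K :=
      ContinuousOn.preimage_isClosed_of_isClosed
        (hv.continuousOn.sub hWcont) isClosed_Icc isClosed_Iic
    have hKne : K.Nonempty :=
      ⟨t₁, ⟨⟨ht₁0, le_refl _⟩, by simp only [mem_preimage, mem_Iic]; linarith⟩⟩
    have hKbdd : BddBelow K := ⟨0, fun x hx => hx.1.1⟩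
    set t₀ := sInf K with ht₀def
    have ht₀K : t₀ ∈ K := hKclosed.csInf_mem hKne hKbdd
    have ht₀Icc : t₀ ∈ Icc 0 t₁ := ht₀K.1
    have hvW : v t₀ ≤ W t₀ := by
      have h := ht₀K.2
      simp only [mem_preimage, mem_Iic] at h
      linarith
    have ht₀T : t₀ < T := lt_of_le_of_lt ht₀Icc.2 ht₁T
    have hbelow : ∀ r, 0 ≤ r → r < t₀ → W r ≤ v r := by
      intro r hr0 hrt
      by_contra hWr
      push_neg at hWr
      have hrK : r ∈ K := ⟨⟨hr0, le_trans hrt.le ht₀Icc.2⟩, by simp; linarith⟩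
      exact absurd (csInf_le hKbdd hrK) (not_le.2 hrt)
    -- positivity of W on [0, t₀]
    have hWpos : ∀ r, r < T → 0 < W r := by
      intro r hr
      have : T - r ≠ 0 := by intro h; linarith [h.symm.le]
      simp only [hWdef]
      positivity
    -- inner monotonicity
    have hWint : ∀ s ∈ Icc (0:ℝ) t₀, IntervalIntegrable (fun r => c / 2 * W r ^ 2) volume 0 s := by
      intro s hs
      apply ContinuousOn.intervalIntegrable
      rw [Set.uIcc_of_le hs.1]
      have : Icc (0:ℝ) s ⊆ Icc 0 t₁ := Icc_subset_Icc le_rfl (le_trans hs.2 ht₀Icc.2)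
      exact (continuousOn_const.mul ((hWcont.mono this).pow 2))
    have hvint : ∀ (a b : ℝ), IntervalIntegrable (fun r => c / 2 * v r ^ 2) volume a b :=
      fun a b => (continuous_const.mul (hv.pow 2)).intervalIntegrable a b
    have hsq : ∀ s ∈ Icc (0:ℝ) t₀,
        (∫ r in (0:ℝ)..s, c / 2 * W r ^ 2) ≤ ∫ r in (0:ℝ)..s, c / 2 * v r ^ 2 := by
      intro s hs
      apply intervalIntegral.integral_mono_ae_restrict hs.1 (hWint s hs) (hvint 0 s)
      have hae : ∀ᵐ r ∂(volume.restrict (Icc (0:ℝ) s)), r ≠ t₀ := by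
        have h0 : ∀ᵐ (r : ℝ) ∂volume, r ≠ t₀ := by
          rw [ae_iff]
          simpa using measure_singleton t₀
        exact ae_mono Measure.restrict_le_self h0
      filter_upwards [ae_restrict_mem measurableSet_Icc, hae] with r hr hne
      have hrt₀ : r < t₀ := lt_of_le_of_ne (le_trans hr.2 hs.2) hne
      have h1 : W r ≤ v r := hbelow r hr.1 hrt₀
      have h2 : 0 < W r := hWpos r (lt_trans hrt₀ ht₀T)
      have : W r ^ 2 ≤ v r ^ 2 := by nlinarith
      nlinarith
    -- outer monotonicity
    have hWCont : ContinuousOn (fun s => ∫ r in (0:ℝ)..s, c / 2 * W r ^ 2) (Icc 0 t₀) := by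
      have h1 : IntegrableOn (fun r => c / 2 * W r ^ 2) (uIcc 0 t₀) volume := by
        rw [Set.uIcc_of_le ht₀Icc.1]
        apply ContinuousOn.integrableOn_compact isCompact_Icc
        have : Icc (0:ℝ) t₀ ⊆ Icc 0 t₁ := Icc_subset_Icc le_rfl ht₀Icc.2
        exact (continuousOn_const.mul ((hWcont.mono this).pow 2))
      have := intervalIntegral.continuousOn_primitive_interval h1
      rwa [Set.uIcc_of_le ht₀Icc.1] at this
    have houter :
        (∫ s in (0:ℝ)..t₀, (∫ r in (0:ℝ)..s, c / 2 * W r ^ 2))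
          ≤ ∫ s in (0:ℝ)..t₀, (∫ r in (0:ℝ)..s, c / 2 * v r ^ 2) := by
      apply intervalIntegral.integral_mono_on ht₀Icc.1
      · apply ContinuousOn.intervalIntegrable
        rwa [Set.uIcc_of_le ht₀Icc.1]
      · apply ContinuousOn.intervalIntegrable
        rw [Set.uIcc_of_le ht₀Icc.1]
        have : Continuous (fun s => ∫ r in (0:ℝ)..s, c / 2 * v r ^ 2) :=
          intervalIntegral.continuous_primitive (fun a b => hvint a b) 0
        exact this.continuousOn
      · exact hsq
    have hWid : 12 / (c * T ^ 2) + 24 * t₀ / (c * T ^ 3)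
        + (∫ s in (0:ℝ)..t₀, (∫ r in (0:ℝ)..s, c / 2 * W r ^ 2)) = W t₀ := by
      simpa only [hWdef] using W_identity hc hT ht₀Icc.1 ht₀T
    have hkey₀ := hkey t₀ ⟨ht₀Icc.1, le_trans (le_trans ht₀Icc.2 ht₁T.le) hTτ⟩
    -- 12/(cT²) + 24 t₀/(cT³) ≤ 36/(cT²)
    have hsmall : 12 / (c * T ^ 2) + 24 * t₀ / (c * T ^ 3) ≤ 36 / (c * T ^ 2) := by
      have h1 : 24 * t₀ / (c * T ^ 3) ≤ 24 * T / (c * T ^ 3) := by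
        have ht₀le : t₀ ≤ T := ht₀T.le
        gcongr
      have h2 : 24 * T / (c * T ^ 3) = 24 / (c * T ^ 2) := by
        field_simp
      have h3 : 12 / (c * T ^ 2) + 24 / (c * T ^ 2) = 36 / (c * T ^ 2) := by ring
      linarith
    linarith [hvW, hkey₀, houter, hWid, hsmall, hℓ]
  -- final contradiction
  set M' := max M 1 with hM'def
  have hM'1 : (1:ℝ) ≤ M' := le_max_right _ _
  have hM'pos : 0 < M' := lt_of_lt_of_le one_pos hM'1
  set ε := min (T / 2) (Real.sqrt (6 / (c * M'))) with hεdef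
  have hsq6 : (0:ℝ) < 6 / (c * M') := by positivity
  have hεpos : 0 < ε := lt_min (by linarith) (Real.sqrt_pos.2 hsq6)
  have hεT2 : ε ≤ T / 2 := min_le_left _ _
  have ht : 0 ≤ T - ε := by linarith
  have htT : T - ε < T := by linarith
  have hWv := compare (T - ε) ht htT
  have hvM : v (T - ε) ≤ M := hMb _ ⟨ht, by linarith⟩
  have hW : W (T - ε) = 12 / (c * ε ^ 2) := by simp [hWdef]
  have hε2 : ε ^ 2 ≤ 6 / (c * M') := by
    have := min_le_right (T / 2) (Real.sqrt (6 / (c * M')))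
    calc ε ^ 2 ≤ Real.sqrt (6 / (c * M')) ^ 2 := by
          apply pow_le_pow_left₀ hεpos.le this
      _ = 6 / (c * M') := Real.sq_sqrt hsq6.le
  have hquot : 2 * M' ≤ 12 / (c * ε ^ 2) := by
    rw [le_div_iff₀ (by positivity)]
    have : c * ε ^ 2 ≤ 6 / M' := by
      calc c * ε ^ 2 ≤ c * (6 / (c * M')) := by nlinarith
        _ = 6 / M' := by field_simp
    calc 2 * M' * (c * ε ^ 2) ≤ 2 * M' * (6 / M') := by nlinarith
      _ = 12 := by field_simp; ring
  have : M ≤ M' := le_max_left _ _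
  rw [hW] at hWv
  linarith



lemma hasDerivAt_primitive {f : ℝ → ℝ} (h : Continuous f) (a t : ℝ) :
    HasDerivAt (fun b => ∫ x in a..b, f x) (f t) t :=
  integral_hasDerivAt_right (h.intervalIntegrable _ _)
    (h.stronglyMeasurableAtFilter _ _) h.continuousAt

lemma swap_oriented {F : ℝ → ℝ → ℝ} (hF : Continuous (Function.uncurry F))
    {a b u w : ℝ} (hab : a ≤ b) (huw : u ≤ w) :
    ∫ z in a..b, (∫ s in u..w, F z s) = ∫ s in u..w, (∫ z in a..b, F z s) := by
  have hInt : Integrable (Function.uncurry F)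
      ((volume.restrict (Ioc a b)).prod (volume.restrict (Ioc u w))) := by
    rw [Measure.prod_restrict]
    have h1 : IntegrableOn (Function.uncurry F) (Icc a b ×ˢ Icc u w) (volume.prod volume) := by
      rw [← Measure.volume_eq_prod]
      exact hF.continuousOn.integrableOn_compact (isCompact_Icc.prod isCompact_Icc)
    exact h1.mono_set (Set.prod_mono Ioc_subset_Icc_self Ioc_subset_Icc_self)
  rw [intervalIntegral.integral_of_le hab, intervalIntegral.integral_of_le huw]
  simp_rw [intervalIntegral.integral_of_le huw, intervalIntegral.integral_of_le hab]
  exact MeasureTheory.integral_integral_swap hInt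

lemma cont_param {F : ℝ → ℝ → ℝ} (hF : Continuous (Function.uncurry F)) (a : ℝ) :
    Continuous (Function.uncurry fun z t => ∫ r in a..t, F z r) := by
  have h : Continuous (Function.uncurry fun (p : ℝ × ℝ) r => F p.1 r) :=
    hF.comp (continuous_fst.fst.prodMk continuous_snd)
  exact intervalIntegral.continuous_parametric_intervalIntegral_of_continuous
    (μ := volume) (a₀ := a) h continuous_snd

lemma cont_param' {F : ℝ → ℝ → ℝ} (hF : Continuous (Function.uncurry F)) (a : ℝ) :
    Continuous (Function.uncurry fun z t => ∫ y in a..z, F y t) := by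
  have h : Continuous (Function.uncurry fun (p : ℝ × ℝ) y => F y p.2) :=
    hF.comp (continuous_snd.prodMk continuous_fst.snd)
  exact intervalIntegral.continuous_parametric_intervalIntegral_of_continuous
    (μ := volume) (a₀ := a) h continuous_fst

lemma sliceL {F : ℝ → ℝ → ℝ} (hF : Continuous (Function.uncurry F)) (z : ℝ) :
    Continuous (F z) := hF.comp (continuous_const.prodMk continuous_id)

lemma sliceR {F : ℝ → ℝ → ℝ} (hF : Continuous (Function.uncurry F)) (t : ℝ) :
    Continuous (fun z => F z t) := hF.comp (continuous_id.prodMk continuous_const)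

noncomputable def GG (g : ℝ → ℝ → ℝ) (L₂ z t : ℝ) : ℝ := ∫ y in L₂..z, g y t
noncomputable def UU (g : ℝ → ℝ → ℝ) (L₂ z t : ℝ) : ℝ := Real.exp (GG g L₂ z t)
noncomputable def EE (g : ℝ → ℝ → ℝ) (L₂ z t : ℝ) : ℝ := ∫ y in L₂..z, UU g L₂ y t

lemma key {c L₂ L₃ τ₀ : ℝ} (hc : 0 < c) (hL : L₂ ≤ L₃) {g : ℝ → ℝ → ℝ}
    (hg : Continuous (Function.uncurry g))
    (heq : ∀ z ∈ Icc L₂ L₃, ∀ t ∈ Icc 0 τ₀,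
      g z t = 1 / 2 + c * ∫ s in (0:ℝ)..t, ∫ r in (0:ℝ)..s, Real.exp (∫ y in L₂..z, g y r)) :
    ∀ t ∈ Icc 0 τ₀,
      (L₃ - L₂) + (∫ s in (0:ℝ)..t, ∫ r in (0:ℝ)..s, c / 2 * (EE g L₂ L₃ r) ^ 2)
        ≤ EE g L₂ L₃ t := by
  -- continuity package
  have hGc : Continuous (Function.uncurry (GG g L₂)) := cont_param' hg L₂
  have hUc : Continuous (Function.uncurry (UU g L₂)) := Real.continuous_exp.comp hGc
  have hEc : Continuous (Function.uncurry (EE g L₂)) := cont_param' hUc L₂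
  set Q : ℝ → ℝ → ℝ := fun z t => ∫ r in (0:ℝ)..t, EE g L₂ z r with hQdef
  have hQc : Continuous (Function.uncurry Q) := cont_param hEc 0
  set R : ℝ → ℝ → ℝ := fun z t => ∫ s in (0:ℝ)..t, Q z s with hRdef
  have hRc : Continuous (Function.uncurry R) := cont_param hQc 0
  -- the integral identity for G
  have hGR : ∀ z ∈ Icc L₂ L₃, ∀ t ∈ Icc 0 τ₀, GG g L₂ z t = (z - L₂) / 2 + c * R z t := by
    intro z hz t ht
    have hH : Continuous (Function.uncurry fun y s => ∫ r in (0:ℝ)..s, UU g L₂ y r) :=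
      cont_param hUc 0
    have hX : Continuous (fun y => ∫ s in (0:ℝ)..t, ∫ r in (0:ℝ)..s, UU g L₂ y r) :=
      sliceR (cont_param hH 0) t
    have h1 : GG g L₂ z t
        = ∫ y in L₂..z, (1 / 2 + c * ∫ s in (0:ℝ)..t, ∫ r in (0:ℝ)..s, UU g L₂ y r) := by
      apply intervalIntegral.integral_congr
      intro y hy
      rw [Set.uIcc_of_le hz.1] at hy
      exact heq y ⟨hy.1, le_trans hy.2 hz.2⟩ t ht
    have h2 : (∫ y in L₂..z, (1 / 2 + c * ∫ s in (0:ℝ)..t, ∫ r in (0:ℝ)..s, UU g L₂ y r))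
        = (∫ y in L₂..z, (1/2 : ℝ))
          + ∫ y in L₂..z, c * ∫ s in (0:ℝ)..t, ∫ r in (0:ℝ)..s, UU g L₂ y r := by
      apply intervalIntegral.integral_add intervalIntegrable_const
      exact (continuous_const.mul hX).intervalIntegrable _ _
    have h3 : (∫ y in L₂..z, c * ∫ s in (0:ℝ)..t, ∫ r in (0:ℝ)..s, UU g L₂ y r)
        = c * ∫ y in L₂..z, ∫ s in (0:ℝ)..t, ∫ r in (0:ℝ)..s, UU g L₂ y r :=
      intervalIntegral.integral_const_mul _ _
    have h4 : (∫ y in L₂..z, ∫ s in (0:ℝ)..t, ∫ r in (0:ℝ)..s, UU g L₂ y r)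
        = ∫ s in (0:ℝ)..t, ∫ y in L₂..z, ∫ r in (0:ℝ)..s, UU g L₂ y r :=
      swap_oriented hH hz.1 ht.1
    have h5 : (∫ s in (0:ℝ)..t, ∫ y in L₂..z, ∫ r in (0:ℝ)..s, UU g L₂ y r) = R z t := by
      apply intervalIntegral.integral_congr
      intro s hs
      rw [Set.uIcc_of_le ht.1] at hs
      show (∫ y in L₂..z, ∫ r in (0:ℝ)..s, UU g L₂ y r) = Q z s
      rw [swap_oriented hUc hz.1 hs.1]
      rfl
    rw [h1, h2, h3, h4, h5]
    simp [intervalIntegral.integral_const]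
    ring
  -- pointwise differential inequality for P = exp((z-L₂)/2 + c R)
  set P : ℝ → ℝ → ℝ := fun z t => Real.exp ((z - L₂) / 2 + c * R z t) with hPdef
  have hPc : Continuous (Function.uncurry P) := by
    apply Real.continuous_exp.comp
    exact ((continuous_fst.sub continuous_const).div_const 2).add (continuous_const.mul hRc)
  have hPpos : ∀ z t, 0 < P z t := fun z t => Real.exp_pos _
  have hQd : ∀ z t, HasDerivAt (Q z) (EE g L₂ z t) t := fun z t =>
    hasDerivAt_primitive (sliceL hEc z) 0 t
  have hRd : ∀ z t, HasDerivAt (R z) (Q z t) t := fun z t =>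
    hasDerivAt_primitive (sliceL hQc z) 0 t
  have hPd : ∀ z t, HasDerivAt (P z) (P z t * (c * Q z t)) t := fun z t =>
    (((hRd z t).const_mul c).const_add ((z - L₂) / 2)).exp
  set A : ℝ → ℝ → ℝ := fun z t => P z t * (c * Q z t) with hAdef
  have hAc : Continuous (Function.uncurry A) := hPc.mul (continuous_const.mul hQc)
  have hAd : ∀ z t, HasDerivAt (A z)
      (P z t * (c * Q z t) * (c * Q z t) + P z t * (c * EE g L₂ z t)) t := fun z t =>
    (hPd z t).mul ((hQd z t).const_mul c)
  have hPEc : Continuous (Function.uncurry fun z r => c * (P z r * EE g L₂ z r)) :=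
    continuous_const.mul (hPc.mul hEc)
  have hAB : ∀ z s, 0 ≤ s → (∫ r in (0:ℝ)..s, c * (P z r * EE g L₂ z r)) ≤ A z s := by
    intro z s hs
    have hder : Continuous (fun r => P z r * (c * Q z r) * (c * Q z r)
        + P z r * (c * EE g L₂ z r)) := by
      exact (((sliceL hPc z).mul (continuous_const.mul (sliceL hQc z))).mul
        (continuous_const.mul (sliceL hQc z))).add
        ((sliceL hPc z).mul (continuous_const.mul (sliceL hEc z)))
    have hint : (∫ r in (0:ℝ)..s, (P z r * (c * Q z r) * (c * Q z r)
        + P z r * (c * EE g L₂ z r))) = A z s - A z 0 :=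
      integral_eq_sub_of_hasDerivAt (fun r _ => hAd z r) (hder.intervalIntegrable _ _)
    have hA0 : A z 0 = 0 := by
      simp [hAdef, hQdef, intervalIntegral.integral_same]
    have hmono : (∫ r in (0:ℝ)..s, c * (P z r * EE g L₂ z r))
        ≤ ∫ r in (0:ℝ)..s, (P z r * (c * Q z r) * (c * Q z r) + P z r * (c * EE g L₂ z r)) := by
      apply intervalIntegral.integral_mono_on hs
        ((sliceL hPEc z).intervalIntegrable _ _) (hder.intervalIntegrable _ _)
      intro r hr
      nlinarith [mul_nonneg (hPpos z r).le (sq_nonneg (c * Q z r)), hPpos z r]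
    linarith [hint, hmono, hA0]
  have hPineq : ∀ z t, 0 ≤ t →
      P z 0 + (∫ s in (0:ℝ)..t, ∫ r in (0:ℝ)..s, c * (P z r * EE g L₂ z r)) ≤ P z t := by
    intro z t ht
    have hint : (∫ s in (0:ℝ)..t, A z s) = P z t - P z 0 :=
      integral_eq_sub_of_hasDerivAt (fun s _ => hPd z s) ((sliceL hAc z).intervalIntegrable _ _)
    have hDc : Continuous (fun s => ∫ r in (0:ℝ)..s, c * (P z r * EE g L₂ z r)) :=
      sliceL (cont_param hPEc 0) z
    have hmono : (∫ s in (0:ℝ)..t, ∫ r in (0:ℝ)..s, c * (P z r * EE g L₂ z r))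
        ≤ ∫ s in (0:ℝ)..t, A z s := by
      apply intervalIntegral.integral_mono_on ht (hDc.intervalIntegrable _ _)
        ((sliceL hAc z).intervalIntegrable _ _)
      intro s hs
      exact hAB z s hs.1
    linarith [hint, hmono]
  -- transfer to UU on the domain
  have hPU : ∀ z ∈ Icc L₂ L₃, ∀ r ∈ Icc (0:ℝ) τ₀, P z r = UU g L₂ z r := by
    intro z hz r hr
    show Real.exp ((z - L₂) / 2 + c * R z r) = UU g L₂ z r
    rw [← hGR z hz r hr]
    rfl
  have hu_ineq : ∀ z ∈ Icc L₂ L₃, ∀ t ∈ Icc (0:ℝ) τ₀,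
      Real.exp ((z - L₂) / 2)
        + (∫ s in (0:ℝ)..t, ∫ r in (0:ℝ)..s, c * (UU g L₂ z r * EE g L₂ z r))
        ≤ UU g L₂ z t := by
    intro z hz t ht
    have h1 := hPineq z t ht.1
    have hP0 : P z 0 = Real.exp ((z - L₂) / 2) := by
      simp [hPdef, hRdef, intervalIntegral.integral_same]
    have hcongr : (∫ s in (0:ℝ)..t, ∫ r in (0:ℝ)..s, c * (P z r * EE g L₂ z r))
        = ∫ s in (0:ℝ)..t, ∫ r in (0:ℝ)..s, c * (UU g L₂ z r * EE g L₂ z r) := by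
      apply intervalIntegral.integral_congr
      intro s hs
      rw [Set.uIcc_of_le ht.1] at hs
      apply intervalIntegral.integral_congr
      intro r hr
      rw [Set.uIcc_of_le hs.1] at hr
      show c * (P z r * EE g L₂ z r) = c * (UU g L₂ z r * EE g L₂ z r)
      rw [hPU z hz r ⟨hr.1, le_trans hr.2 (le_trans hs.2 ht.2)⟩]
    rw [hP0, hcongr] at h1
    rw [hPU z hz t ht] at h1
    exact h1
  -- integrate in z
  intro t ht
  have hUEc : Continuous (Function.uncurry fun z r => c * (UU g L₂ z r * EE g L₂ z r)) :=
    continuous_const.mul (hUc.mul hEc)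
  have hDc : Continuous (Function.uncurry fun z s =>
      ∫ r in (0:ℝ)..s, c * (UU g L₂ z r * EE g L₂ z r)) := cont_param hUEc 0
  have hLHSc : Continuous (fun z => Real.exp ((z - L₂) / 2)
      + ∫ s in (0:ℝ)..t, ∫ r in (0:ℝ)..s, c * (UU g L₂ z r * EE g L₂ z r)) := by
    apply Continuous.add
    · exact Real.continuous_exp.comp ((continuous_id.sub continuous_const).div_const 2)
    · exact sliceR (cont_param hDc 0) t
  have h1 : (∫ z in L₂..L₃, (Real.exp ((z - L₂) / 2)
        + ∫ s in (0:ℝ)..t, ∫ r in (0:ℝ)..s, c * (UU g L₂ z r * EE g L₂ z r)))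
      ≤ EE g L₂ L₃ t := by
    apply intervalIntegral.integral_mono_on hL (hLHSc.intervalIntegrable _ _)
      ((sliceR hUc t).intervalIntegrable _ _)
    intro z hz
    exact hu_ineq z hz t ht
  have h2 : (∫ z in L₂..L₃, (Real.exp ((z - L₂) / 2)
        + ∫ s in (0:ℝ)..t, ∫ r in (0:ℝ)..s, c * (UU g L₂ z r * EE g L₂ z r)))
      = (∫ z in L₂..L₃, Real.exp ((z - L₂) / 2))
        + ∫ z in L₂..L₃, ∫ s in (0:ℝ)..t, ∫ r in (0:ℝ)..s, c * (UU g L₂ z r * EE g L₂ z r) := by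
    apply intervalIntegral.integral_add
    · exact (Real.continuous_exp.comp
        ((continuous_id.sub continuous_const).div_const 2)).intervalIntegrable _ _
    · exact (sliceR (cont_param hDc 0) t).intervalIntegrable _ _
  have h3 : L₃ - L₂ ≤ ∫ z in L₂..L₃, Real.exp ((z - L₂) / 2) := by
    have := intervalIntegral.integral_mono_on hL (_root_.intervalIntegrable_const (μ := volume) (c := (1:ℝ)))
      ((Real.continuous_exp.comp
        ((continuous_id.sub continuous_const).div_const 2)).intervalIntegrable L₂ L₃)
      (fun z hz => by
        have : (0:ℝ) ≤ (z - L₂) / 2 := by linarith [hz.1]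
        calc (1:ℝ) = Real.exp 0 := by simp
          _ ≤ Real.exp ((z - L₂) / 2) := Real.exp_le_exp.2 this)
    simpa using this
  have h4 : (∫ z in L₂..L₃, ∫ s in (0:ℝ)..t, ∫ r in (0:ℝ)..s, c * (UU g L₂ z r * EE g L₂ z r))
      = ∫ s in (0:ℝ)..t, ∫ z in L₂..L₃, ∫ r in (0:ℝ)..s, c * (UU g L₂ z r * EE g L₂ z r) :=
    swap_oriented hDc hL ht.1
  have h6 : ∀ r : ℝ, (∫ z in L₂..L₃, c * (UU g L₂ z r * EE g L₂ z r))
      = c / 2 * (EE g L₂ L₃ r) ^ 2 := by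
    intro r
    have hEd : ∀ z, HasDerivAt (fun z => EE g L₂ z r) (UU g L₂ z r) z := fun z =>
      hasDerivAt_primitive (sliceR hUc r) L₂ z
    have hFd : ∀ z, HasDerivAt (fun z => c / 2 * (EE g L₂ z r) ^ 2)
        (c / 2 * ((2:ℝ) * EE g L₂ z r ^ 1 * UU g L₂ z r)) z := fun z =>
      ((hEd z).pow 2).const_mul (c / 2)
    have heqfun : (fun z => c * (UU g L₂ z r * EE g L₂ z r))
        = fun z => c / 2 * ((2:ℝ) * EE g L₂ z r ^ 1 * UU g L₂ z r) := by
      funext z; ring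
    rw [heqfun]
    have hint : (∫ z in L₂..L₃, c / 2 * ((2:ℝ) * EE g L₂ z r ^ 1 * UU g L₂ z r))
        = c / 2 * (EE g L₂ L₃ r) ^ 2 - c / 2 * (EE g L₂ L₂ r) ^ 2 := by
      apply integral_eq_sub_of_hasDerivAt (fun z _ => hFd z)
      have : Continuous (fun z => c / 2 * ((2:ℝ) * EE g L₂ z r ^ 1 * UU g L₂ z r)) :=
        continuous_const.mul ((continuous_const.mul ((sliceR hEc r).pow 1)).mul (sliceR hUc r))
      exact this.intervalIntegrable _ _
    rw [hint]
    have : EE g L₂ L₂ r = 0 := by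
      simp [EE, intervalIntegral.integral_same]
    rw [this]
    ring
  have h5 : (∫ s in (0:ℝ)..t, ∫ z in L₂..L₃, ∫ r in (0:ℝ)..s, c * (UU g L₂ z r * EE g L₂ z r))
      = ∫ s in (0:ℝ)..t, ∫ r in (0:ℝ)..s, c / 2 * (EE g L₂ L₃ r) ^ 2 := by
    apply intervalIntegral.integral_congr
    intro s hs
    rw [Set.uIcc_of_le ht.1] at hs
    show (∫ z in L₂..L₃, ∫ r in (0:ℝ)..s, c * (UU g L₂ z r * EE g L₂ z r))
      = ∫ r in (0:ℝ)..s, c / 2 * EE g L₂ L₃ r ^ 2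
    rw [swap_oriented hUEc hL hs.1]
    exact intervalIntegral.integral_congr (fun r _ => h6 r)
  linarith [h1, h2.ge, h3, h4.ge, h5.ge, h2.le, h4.le, h5.le]


end IntEqBlowupAux

open MeasureTheory

/-- `f` is a solution of the comparison integral equation
`f(z,t) = 1/2 + c·∫₀ᵗ∫₀ˢ exp(∫_{L₂}^z f(y,r) dy) dr ds` on `[L₂,L₃] × S`. -/
def IsSolIntEq (L₂ L₃ c : ℝ) (S : Set ℝ) (f : ℝ → ℝ → ℝ) : Prop :=
  ContinuousOn (fun p : ℝ × ℝ => f p.1 p.2) (Set.Icc L₂ L₃ ×ˢ S) ∧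
  ∀ z ∈ Set.Icc L₂ L₃, ∀ t ∈ S,
    f z t = 1 / 2 + c * ∫ s in (0:ℝ)..t, ∫ r in (0:ℝ)..s, Real.exp (∫ y in L₂..z, f y r)

/-- **Blow up of the comparison integral equation before any prescribed time
(Lemma 4.5(b)).** For any `c > 0`, `L₂` and `τ₀ > 0` one can choose `L₃ > L₂` so that no
solution of the integral equation exists on `[L₂,L₃] × [0,τ₀]`. -/
theorem integral_equation_blowup (c L₂ τ₀ : ℝ) (hc : 0 < c) (hτ₀ : 0 < τ₀) :
    ∃ L₃ : ℝ, L₂ < L₃ ∧ ¬ ∃ f : ℝ → ℝ → ℝ, IsSolIntEq L₂ L₃ c (Set.Icc 0 τ₀) f := by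
  classical
  set T := τ₀ / 2 with hTdef
  have hT : 0 < T := by positivity
  have hTτ : T ≤ τ₀ := by rw [hTdef]; linarith
  set ℓ := 36 / (c * T ^ 2) + 1 with hℓdef
  have h36 : 0 < 36 / (c * T ^ 2) := by positivity
  have hℓpos : 0 < ℓ := by rw [hℓdef]; positivity
  refine ⟨L₂ + ℓ, by linarith, ?_⟩
  rintro ⟨f, hfc, hfe⟩
  set L₃ := L₂ + ℓ with hL₃def
  have hL : L₂ ≤ L₃ := by rw [hL₃def]; linarith
  -- clamping maps, to extend `f` continuously to the whole plane
  set pz : ℝ → ℝ := fun z => max L₂ (min z L₃) with hpzdef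
  set pt : ℝ → ℝ := fun t => max 0 (min t τ₀) with hptdef
  have hpzmem : ∀ z, pz z ∈ Set.Icc L₂ L₃ :=
    fun z => ⟨le_max_left _ _, max_le hL (min_le_right _ _)⟩
  have hptmem : ∀ t, pt t ∈ Set.Icc (0:ℝ) τ₀ :=
    fun t => ⟨le_max_left _ _, max_le hτ₀.le (min_le_right _ _)⟩
  have hpzc : Continuous pz := continuous_const.max (continuous_id.min continuous_const)
  have hptc : Continuous pt := continuous_const.max (continuous_id.min continuous_const)
  set g : ℝ → ℝ → ℝ := fun z t => f (pz z) (pt t) with hgdef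
  have hg : Continuous (Function.uncurry g) := by
    have hmap : ∀ p : ℝ × ℝ, (pz p.1, pt p.2) ∈ Set.Icc L₂ L₃ ×ˢ Set.Icc (0:ℝ) τ₀ :=
      fun p => Set.mem_prod.2 ⟨hpzmem p.1, hptmem p.2⟩
    exact hfc.comp_continuous
      ((hpzc.comp continuous_fst).prodMk (hptc.comp continuous_snd)) hmap
  have hgf : ∀ z ∈ Set.Icc L₂ L₃, ∀ t ∈ Set.Icc (0:ℝ) τ₀, g z t = f z t := by
    intro z hz t ht
    have h1 : pz z = z := by
      rw [hpzdef]; simp only []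
      rw [min_eq_left hz.2, max_eq_right hz.1]
    have h2 : pt t = t := by
      rw [hptdef]; simp only []
      rw [min_eq_left ht.2, max_eq_right ht.1]
    rw [hgdef]; simp only []
    rw [h1, h2]
  have heqg : ∀ z ∈ Set.Icc L₂ L₃, ∀ t ∈ Set.Icc (0:ℝ) τ₀,
      g z t = 1 / 2 + c * ∫ s in (0:ℝ)..t, ∫ r in (0:ℝ)..s,
        Real.exp (∫ y in L₂..z, g y r) := by
    intro z hz t ht
    rw [hgf z hz t ht, hfe z hz t ht]
    have houter : (∫ s in (0:ℝ)..t, ∫ r in (0:ℝ)..s, Real.exp (∫ y in L₂..z, f y r))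
        = ∫ s in (0:ℝ)..t, ∫ r in (0:ℝ)..s, Real.exp (∫ y in L₂..z, g y r) := by
      apply intervalIntegral.integral_congr
      intro s hs
      rw [Set.uIcc_of_le ht.1] at hs
      apply intervalIntegral.integral_congr
      intro r hr
      rw [Set.uIcc_of_le hs.1] at hr
      have hrmem : r ∈ Set.Icc (0:ℝ) τ₀ := ⟨hr.1, le_trans hr.2 (le_trans hs.2 ht.2)⟩
      have : (∫ y in L₂..z, f y r) = ∫ y in L₂..z, g y r := by
        apply intervalIntegral.integral_congr
        intro y hy
        rw [Set.uIcc_of_le hz.1] at hy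
        exact (hgf y ⟨hy.1, le_trans hy.2 hz.2⟩ r hrmem).symm
      simp only [this]
    rw [houter]
  -- the key inequality and the comparison argument
  have hkey := IntEqBlowupAux.key hc hL hg heqg
  have hEL : L₃ - L₂ = ℓ := by rw [hL₃def]; ring
  have hvc : Continuous (IntEqBlowupAux.EE g L₂ L₃) := by
    have hGc : Continuous (Function.uncurry (IntEqBlowupAux.GG g L₂)) :=
      IntEqBlowupAux.cont_param' hg L₂
    have hUc : Continuous (Function.uncurry (IntEqBlowupAux.UU g L₂)) :=
      Real.continuous_exp.comp hGc
    have hEc : Continuous (Function.uncurry (IntEqBlowupAux.EE g L₂)) :=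
      IntEqBlowupAux.cont_param' hUc L₂
    exact IntEqBlowupAux.sliceL hEc L₃
  have hℓlt : 36 / (c * T ^ 2) < ℓ := by rw [hℓdef]; linarith
  apply IntEqBlowupAux.comparison hc hT hTτ hℓlt (IntEqBlowupAux.EE g L₂ L₃) hvc
  intro t ht
  have := hkey t ht
  rw [hEL] at this
  exact this
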